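/- (Commutative two-base binomial formula) Let x, y commute and q, Q be scalars. Define (x+y)^n_{q,Q} = (x + q^{n-1} y)(x + q^{n-2} Q y)···(x + q Q^{n-2} y)(x + Q^{n-1} y). Then (x+y)^n_{q,Q} = sum_{k=0}^n C(n,k)_{q,Q} (qQ)^{k(k-1)/2} x^{n-k} y^k. -/
import Mathlib


/-- The two-base binomial coefficients `C(n,k)_{q,Q}`, defined via the two-base
    Pascal recursion `C(n+1,k) = q^k C(n,k) + Q^{n+1-k} C(n,k-1)` with
    `C(n,0) = C(n,n) = 1` (equivalently `[n]!/([k]![n-k]!)` with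
    `[m]_{q,Q} = ∑_{i<m} q^i Q^{m-1-i}`). -/
def qqBinom {R : Type*} [CommRing R] (q Q : R) : ℕ → ℕ → R
  | 0, 0 => 1
  | 0, _ + 1 => 0
  | _ + 1, 0 => 1
  | n + 1, k + 1 => q ^ (k + 1) * qqBinom q Q n (k + 1) + Q ^ (n - k) * qqBinom q Q n k

lemma qqBinom_eq_zero {R : Type*} [CommRing R] (q Q : R) :
    ∀ n k : ℕ, n < k → qqBinom q Q n k = 0
  | 0, _ + 1, _ => rfl
  | n + 1, k + 1, h => by
    rw [qqBinom, qqBinom_eq_zero q Q n (k + 1) (by omega),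
      qqBinom_eq_zero q Q n k (by omega)]
    ring

lemma qqBinom_zero {R : Type*} [CommRing R] (q Q : R) (n : ℕ) :
    qqBinom q Q n 0 = 1 := by
  cases n <;> rfl

lemma tri_succ (j : ℕ) : (j + 1) * j / 2 = j * (j - 1) / 2 + j := by
  cases j with
  | zero => rfl
  | succ m =>
    rw [show (m + 1 + 1) * (m + 1) = (m + 1) * m + 2 * (m + 1) by ring,
      Nat.add_mul_div_left _ _ (by norm_num : (0 : ℕ) < 2)]
    simp

/-- commutative two-base binomial formula:
    `(x+q^{n-1}y)(x+q^{n-2}Qy)⋯(x+qQ^{n-2}y)(x+Q^{n-1}y)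
       = ∑_{k=0}^n C(n,k)_{q,Q} (qQ)^{k(k-1)/2} x^{n-k} y^k`. -/
theorem commutative_two_base_binomial {R : Type*} [CommRing R]
    (q Q x y : R) (n : ℕ) :
    ∏ k ∈ Finset.range n, (x + q ^ (n - 1 - k) * Q ^ k * y)
      = ∑ k ∈ Finset.range (n + 1),
          qqBinom q Q n k * (q * Q) ^ (k * (k - 1) / 2) * x ^ (n - k) * y ^ k := by
  induction n generalizing y with
  | zero => simp [qqBinom]
  | succ n ih =>
    rw [Finset.prod_range_succ]
    have h1 : ∏ k ∈ Finset.range n, (x + q ^ (n + 1 - 1 - k) * Q ^ k * y)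
        = ∏ k ∈ Finset.range n, (x + q ^ (n - 1 - k) * Q ^ k * (q * y)) := by
      refine Finset.prod_congr rfl fun k hk => ?_
      simp only [Finset.mem_range] at hk
      rw [show n + 1 - 1 - k = n - 1 - k + 1 by omega]
      ring
    rw [h1, ih (q * y)]
    -- Abbreviations
    set f : ℕ → R := fun k =>
      qqBinom q Q (n + 1) k * (q * Q) ^ (k * (k - 1) / 2) * x ^ (n + 1 - k) * y ^ k
        with hf
    set S : ℕ → R := fun k =>
      qqBinom q Q n k * (q * Q) ^ (k * (k - 1) / 2) * x ^ (n - k) * (q * y) ^ k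
        with hS
    show (∑ k ∈ Finset.range (n + 1), S k) * (x + q ^ (n + 1 - 1 - n) * Q ^ n * y)
        = ∑ k ∈ Finset.range (n + 1 + 1), f k
    have hA : ∀ j : ℕ, j < n →
        S (j + 1) * x
          = q ^ (j + 1) * qqBinom q Q n (j + 1) *
              (q * Q) ^ ((j + 1) * j / 2) * x ^ (n - j) * y ^ (j + 1) := by
      intro j hj
      simp only [hS, Nat.add_sub_cancel]
      rw [show n - j = n - (j + 1) + 1 by omega]
      ring
    have hB : ∀ j : ℕ, j < n + 1 →
        S j * (q ^ (n + 1 - 1 - n) * Q ^ n * y)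
          = Q ^ (n - j) * qqBinom q Q n j *
              (q * Q) ^ ((j + 1) * j / 2) * x ^ (n - j) * y ^ (j + 1) := by
      intro j hj
      simp only [hS, tri_succ j, pow_add, mul_pow, Nat.add_sub_cancel,
        Nat.sub_self, pow_zero]
      rw [show (Q : R) ^ n = Q ^ (n - j) * Q ^ j by
          rw [← pow_add]; congr 1; omega]
      ring
    have hfsucc : ∀ j : ℕ,
        f (j + 1) = q ^ (j + 1) * qqBinom q Q n (j + 1) *
              (q * Q) ^ ((j + 1) * j / 2) * x ^ (n - j) * y ^ (j + 1)
            + Q ^ (n - j) * qqBinom q Q n j *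
              (q * Q) ^ ((j + 1) * j / 2) * x ^ (n - j) * y ^ (j + 1) := by
      intro j
      simp only [hf, qqBinom]
      rw [show (j + 1) * (j + 1 - 1) / 2 = (j + 1) * j / 2 by rfl,
        show n + 1 - (j + 1) = n - j by omega]
      ring
    rw [Finset.sum_range_succ' f (n + 1), Finset.sum_congr rfl fun j hj => hfsucc j,
      Finset.sum_add_distrib]
    rw [mul_add, Finset.sum_mul, Finset.sum_mul,
      Finset.sum_range_succ' (fun k => S k * x) n,
      Finset.sum_congr rfl (fun j hj => hA j (Finset.mem_range.mp hj)),
      Finset.sum_congr rfl (fun j hj =>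
        hB j (Finset.mem_range.mp hj))]
    rw [Finset.sum_range_succ
      (fun j => q ^ (j + 1) * qqBinom q Q n (j + 1) *
        (q * Q) ^ ((j + 1) * j / 2) * x ^ (n - j) * y ^ (j + 1)) n]
    rw [qqBinom_eq_zero q Q n (n + 1) (by omega)]
    have hS0 : S 0 * x = f 0 := by
      simp [hS, hf, qqBinom_zero]
      ring
    rw [hS0]
    ring
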